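/- Let m_x, m_y ∈ ℝ, σ_x > 0, s_y > 0 and c ∈ ℝ with c² < σ_x² s_y², and let f be the bivariate Gaussian density on ℝ² with mean (m_x, m_y) and covariance matrix [[σ_x², c],[c, s_y²]]. Set a* = (a − m_y)/s_y for a ∈ ℝ. Then ∫_{ℝ×(-∞,a]} x f(x,y) d(x,y) = m_x Φ(a*) − (c/s_y) φ(a*); equivalently, E[X | Y ≤ a] = m_x − (c/s_y)·φ(a*)/Φ(a*). -/

import Mathlib

open MeasureTheory Real Matrix

/-- The standard normal probability density function. -/
noncomputable def stdPdf (t : ℝ) : ℝ := (Real.sqrt (2 * Real.pi))⁻¹ * Real.exp (-t ^ 2 / 2)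

/-- The standard normal cumulative distribution function. -/
noncomputable def stdCdf (t : ℝ) : ℝ := ∫ u in Set.Iic t, stdPdf u

/-- The Gaussian density on `ℝᵈ` with mean `μ` and covariance matrix `S`. -/
noncomputable def gaussDensity {d : ℕ} (μ : Fin d → ℝ) (S : Matrix (Fin d) (Fin d) ℝ)
    (z : Fin d → ℝ) : ℝ :=
  (Real.sqrt ((2 * Real.pi) ^ d * S.det))⁻¹ *
    Real.exp (-(1 / 2) * ((z - μ) ⬝ᵥ (S⁻¹ *ᵥ (z - μ))))

/-!
With `τ² = (σx² sy² - c²) / sy²`, the bivariate density factors as the `N(my, sy²)` density of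
`y` times the `N(mx + c (y - my) / sy², τ²)` density of `x`. Integrating out `x` first leaves the
conditional mean, so the integral is `∫_{y ≤ a} (mx + c (y - my) / sy²) g(y) dy` with `g` the
marginal density. The substitution `v = (y - my) / sy` turns this into
`∫_{v ≤ a*} (mx + (c / sy) v) φ(v) dv`, and `φ' = -v φ` evaluates the second part.
-/

open Set Filter ProbabilityTheory Topology

lemma stdPdf_eq_gaussianPDFReal : stdPdf = gaussianPDFReal 0 1 := by
  ext t
  simp [stdPdf, gaussianPDFReal]

lemma integrable_stdPdf : Integrable stdPdf :=
  stdPdf_eq_gaussianPDFReal ▸ integrable_gaussianPDFReal 0 1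

lemma integral_stdPdf : ∫ t, stdPdf t = 1 :=
  stdPdf_eq_gaussianPDFReal ▸ integral_gaussianPDFReal_eq_one 0 one_ne_zero

lemma continuous_stdPdf : Continuous stdPdf := by
  unfold stdPdf; fun_prop

lemma integrable_mul_stdPdf : Integrable fun t => t * stdPdf t := by
  refine ((integrable_mul_exp_neg_mul_sq (b := 1 / 2) (by norm_num)).const_mul
    (√(2 * π))⁻¹).congr (ae_of_all _ fun t => ?_)
  simp only [stdPdf]
  ring_nf

lemma integral_mul_stdPdf : ∫ t, t * stdPdf t = 0 := by
  have h := integral_gaussianReal_eq_integral_smul (μ := 0) (f := id) one_ne_zero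
  simpa [← stdPdf_eq_gaussianPDFReal, mul_comm] using h.symm

lemma hasDerivAt_stdPdf (t : ℝ) : HasDerivAt stdPdf (-t * stdPdf t) t := by
  have h : HasDerivAt (fun u : ℝ => -u ^ 2 / 2) (-t) t :=
    ((hasDerivAt_pow 2 t).neg.div_const 2).congr_deriv (by norm_num; ring)
  exact (h.exp.const_mul (√(2 * π))⁻¹).congr_deriv (by unfold stdPdf; ring)

lemma tendsto_stdPdf_atBot : Tendsto stdPdf atBot (𝓝 0) := by
  have hsq : Tendsto (fun t : ℝ => t ^ 2) atBot atTop := by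
    simpa only [Function.comp_def, neg_sq] using
      (tendsto_pow_atTop (α := ℝ) two_ne_zero).comp tendsto_neg_atBot_atTop
  have h := (tendsto_exp_atBot.comp
    ((tendsto_neg_atTop_atBot.comp hsq).atBot_div_const two_pos)).const_mul (√(2 * π))⁻¹
  rw [mul_zero] at h
  exact h

lemma setIntegral_Iic_mul_stdPdf (t : ℝ) : ∫ u in Iic t, u * stdPdf u = -stdPdf t := by
  have h := integral_Iic_of_hasDerivAt_of_tendsto' (f := fun u => -stdPdf u) (m := 0) (a := t)
    (fun u _ => by simpa using (hasDerivAt_stdPdf u).fun_neg) integrable_mul_stdPdf.integrableOn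
    (by simpa using tendsto_stdPdf_atBot.neg)
  simpa using h

section AffineSubstitution

variable {E : Type*} [NormedAddCommGroup E]

lemma MeasureTheory.Integrable.comp_sub_div {F : ℝ → E} (hF : Integrable F) (m : ℝ) {s : ℝ}
    (hs : s ≠ 0) : Integrable fun y => F ((y - m) / s) :=
  (hF.comp_div hs).comp_sub_right m

variable [NormedSpace ℝ E]

lemma integral_comp_sub_div (F : ℝ → E) (m s : ℝ) :
    ∫ y, F ((y - m) / s) = |s| • ∫ v, F v := by
  rw [integral_sub_right_eq_self (fun y => F (y / s)) m, Measure.integral_comp_div]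

lemma setIntegral_Iic_comp_sub_div (F : ℝ → E) (m : ℝ) {s : ℝ} (hs : 0 < s) (b : ℝ) :
    ∫ y in Iic b, F ((y - m) / s) = s • ∫ v in Iic ((b - m) / s), F v := by
  have hmem : ∀ y, y ∈ Iic b ↔ (y - m) / s ∈ Iic ((b - m) / s) := fun y => by
    simp only [mem_Iic, div_le_div_iff_of_pos_right hs, sub_le_sub_iff_right]
  have h := integral_comp_sub_div ((Iic ((b - m) / s)).indicator F) m s
  rw [abs_of_pos hs, integral_indicator measurableSet_Iic] at h
  rw [← h, ← integral_indicator measurableSet_Iic]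
  congr 1 with y
  simp only [indicator_apply, hmem]

end AffineSubstitution

-- The `N(m, s²)` density, parametrised by the standard deviation (`gaussianPDFReal` takes the
-- variance).
noncomputable def normalPdf (m s x : ℝ) : ℝ := s⁻¹ * stdPdf ((x - m) / s)

lemma mul_normalPdf {s : ℝ} (hs : s ≠ 0) (m x : ℝ) :
    x * normalPdf m s x = m * normalPdf m s x + (fun u => u * stdPdf u) ((x - m) / s) := by
  simp only [normalPdf]
  field_simp
  ring

lemma integrable_normalPdf (m : ℝ) {s : ℝ} (hs : s ≠ 0) : Integrable (normalPdf m s) :=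
  (integrable_stdPdf.comp_sub_div m hs).const_mul s⁻¹

lemma integrable_mul_normalPdf (m : ℝ) {s : ℝ} (hs : s ≠ 0) :
    Integrable fun x => x * normalPdf m s x := by
  simp only [mul_normalPdf hs]
  exact ((integrable_normalPdf m hs).const_mul m).add (integrable_mul_stdPdf.comp_sub_div m hs)

lemma integral_normalPdf (m : ℝ) {s : ℝ} (hs : 0 < s) : ∫ x, normalPdf m s x = 1 := by
  simp only [normalPdf]
  rw [integral_const_mul, integral_comp_sub_div, integral_stdPdf, abs_of_pos hs, smul_eq_mul,
    mul_one, inv_mul_cancel₀ hs.ne']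

lemma integral_mul_normalPdf (m : ℝ) {s : ℝ} (hs : 0 < s) : ∫ x, x * normalPdf m s x = m := by
  simp only [mul_normalPdf hs.ne']
  rw [integral_add ((integrable_normalPdf m hs.ne').const_mul m)
    (integrable_mul_stdPdf.comp_sub_div m hs.ne'), integral_const_mul, integral_normalPdf m hs,
    integral_comp_sub_div (fun u => u * stdPdf u), integral_mul_stdPdf, smul_zero, add_zero,
    mul_one]

lemma gaussDensity_fin_two_eq_mul {mx my vx c sy : ℝ} (hsy : 0 < sy) (hc : c ^ 2 < vx * sy ^ 2)
    (x y : ℝ) :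
    gaussDensity ![mx, my] !![vx, c; c, sy ^ 2] ![x, y] =
      normalPdf my sy y *
        normalPdf (mx + c / sy ^ 2 * (y - my)) (√(vx * sy ^ 2 - c ^ 2) / sy) x := by
  have hΔ : 0 < vx * sy ^ 2 - c ^ 2 := by linarith
  have hτsq : √(vx * sy ^ 2 - c ^ 2) ^ 2 = vx * sy ^ 2 - c ^ 2 := sq_sqrt hΔ.le
  have h2π : √((2 * π) ^ 2 * (vx * sy ^ 2 - c ^ 2)) = 2 * π * √(vx * sy ^ 2 - c ^ 2) := by
    rw [sqrt_mul (by positivity), sqrt_sq (by positivity)]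
  have hπ : √(2 * π) ^ 2 = 2 * π := sq_sqrt (by positivity)
  simp only [gaussDensity, normalPdf, stdPdf, inv_def, adjugate_fin_two_of, det_fin_two_of,
    Ring.inverse_eq_inv', smul_of, dotProduct, mulVec, Fin.sum_univ_two, of_apply, cons_val',
    cons_val_fin_one, cons_val_zero, cons_val_one, Pi.sub_apply, smul_cons, smul_eq_mul,
    Matrix.smul_empty]
  rw [← sq c, show ∀ a b d e₁ e₂ : ℝ,
      a * (b * e₁) * (d * (b * e₂)) = a * b * d * b * (e₁ * e₂) from fun _ _ _ _ _ => by ring,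
    ← exp_add]
  congr 1
  · rw [show (Nat.succ 0).succ = 2 from rfl, h2π]
    field_simp
    rw [hπ]
  · congr 1
    simp only [div_pow, hτsq]
    field_simp
    ring

lemma integrable_prod_mul_comp_sub_div {w μ G : ℝ → ℝ} (hw : Integrable w) (hμ : Measurable μ)
    (hG : Integrable G) (hGm : Measurable G) {τ : ℝ} (hτ : τ ≠ 0) :
    Integrable (fun p : ℝ × ℝ => w p.2 * G ((p.1 - μ p.2) / τ)) (volume.prod volume) := by
  refine (integrable_prod_iff' (hw.aestronglyMeasurable.comp_snd.mul
    (hGm.comp (by fun_prop)).aestronglyMeasurable)).2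
    ⟨ae_of_all _ fun y => (hG.comp_sub_div (μ y) hτ).const_mul (w y), ?_⟩
  show Integrable (fun y => ∫ x, ‖w y * G ((x - μ y) / τ)‖)
  simp only [norm_mul, integral_const_mul, integral_comp_sub_div (fun u => ‖G u‖), smul_eq_mul]
  exact hw.norm.mul_const _

lemma setIntegral_univ_prod_mul_normalPdf {g μ : ℝ → ℝ} (hg : Integrable g)
    (hμg : Integrable fun y => μ y * g y) (hμ : Measurable μ) {τ : ℝ} (hτ : 0 < τ) (s : Set ℝ) :
    ∫ p in univ ×ˢ s, p.1 * (g p.2 * normalPdf (μ p.2) τ p.1) = ∫ y in s, μ y * g y := by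
  have hsplit : (fun p : ℝ × ℝ => p.1 * (g p.2 * normalPdf (μ p.2) τ p.1)) = fun p =>
      τ⁻¹ * (μ p.2 * g p.2) * stdPdf ((p.1 - μ p.2) / τ) +
        g p.2 * (fun u => u * stdPdf u) ((p.1 - μ p.2) / τ) := by
    ext p
    rw [mul_left_comm, mul_normalPdf hτ.ne', normalPdf]
    ring
  have hint : Integrable (fun p : ℝ × ℝ => p.1 * (g p.2 * normalPdf (μ p.2) τ p.1))
      (volume.prod volume) := by
    rw [hsplit]
    exact (integrable_prod_mul_comp_sub_div (hμg.const_mul τ⁻¹) hμ integrable_stdPdf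
      continuous_stdPdf.measurable hτ.ne').add (integrable_prod_mul_comp_sub_div hg hμ
        integrable_mul_stdPdf (continuous_id.mul continuous_stdPdf).measurable hτ.ne')
  have hrestrict : (volume : Measure (ℝ × ℝ)).restrict (univ ×ˢ s) =
      volume.prod (volume.restrict s) := by
    rw [Measure.volume_eq_prod, ← Measure.prod_restrict, Measure.restrict_univ]
  rw [hrestrict, integral_prod_symm _ (hrestrict ▸ hint.integrableOn)]
  congr 1 with y
  simp only [mul_left_comm _ (g y), integral_const_mul, integral_mul_normalPdf _ hτ, mul_comm]

lemma integrable_affine_mul_normalPdf (α β m : ℝ) {s : ℝ} (hs : s ≠ 0) :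
    Integrable fun y => (α + β * (y - m)) * normalPdf m s y := by
  simp only [add_mul, mul_assoc, sub_mul]
  exact ((integrable_normalPdf m hs).const_mul α).add
    (((integrable_mul_normalPdf m hs).sub ((integrable_normalPdf m hs).const_mul m)).const_mul β)

lemma setIntegral_Iic_affine_mul_normalPdf (α β m : ℝ) {s : ℝ} (hs : 0 < s) (b : ℝ) :
    ∫ y in Iic b, (α + β * (y - m)) * normalPdf m s y =
      α * stdCdf ((b - m) / s) - β * s * stdPdf ((b - m) / s) := by
  set K : ℝ → ℝ := fun v => s⁻¹ * (α * stdPdf v + β * s * (v * stdPdf v))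
  have hK : (fun y => (α + β * (y - m)) * normalPdf m s y) = fun y => K ((y - m) / s) := by
    ext y
    simp only [K, normalPdf]
    field_simp
  rw [hK, setIntegral_Iic_comp_sub_div K m hs, integral_const_mul,
    integral_add (integrable_stdPdf.const_mul α).integrableOn
      (integrable_mul_stdPdf.const_mul _).integrableOn,
    integral_const_mul, integral_const_mul, setIntegral_Iic_mul_stdPdf, stdCdf, smul_eq_mul,
    mul_inv_cancel_left₀ hs.ne']
  ring

theorem bivariate_censored_conditional_mean_lower_general
    (mx my σx sy c : ℝ) (hsy : 0 < sy) (hc : c ^ 2 < σx ^ 2 * sy ^ 2)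
    (f : ℝ → ℝ → ℝ)
    (hf : ∀ x y, f x y = gaussDensity ![mx, my] !![σx ^ 2, c; c, sy ^ 2] ![x, y])
    (a : ℝ) :
    ∫ p in (Set.univ ×ˢ Set.Iic a : Set (ℝ × ℝ)), p.1 * f p.1 p.2
      = mx * stdCdf ((a - my) / sy) - (c / sy) * stdPdf ((a - my) / sy) := by
  have hτ : 0 < √(σx ^ 2 * sy ^ 2 - c ^ 2) / sy := div_pos (sqrt_pos.2 (by linarith)) hsy
  simp only [hf, gaussDensity_fin_two_eq_mul hsy hc]
  rw [setIntegral_univ_prod_mul_normalPdf (integrable_normalPdf my hsy.ne')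
      (integrable_affine_mul_normalPdf mx (c / sy ^ 2) my hsy.ne') (by fun_prop) hτ,
    setIntegral_Iic_affine_mul_normalPdf _ _ _ hsy]
  field_simp

theorem bivariate_censored_conditional_mean_lower
    (mx my σx sy c : ℝ) (hσx : 0 < σx) (hsy : 0 < sy) (hc : c ^ 2 < σx ^ 2 * sy ^ 2)
    (f : ℝ → ℝ → ℝ)
    (hf : ∀ x y, f x y = gaussDensity ![mx, my] !![σx ^ 2, c; c, sy ^ 2] ![x, y])
    (a : ℝ) :
    ∫ p in (Set.univ ×ˢ Set.Iic a : Set (ℝ × ℝ)), p.1 * f p.1 p.2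
      = mx * stdCdf ((a - my) / sy) - (c / sy) * stdPdf ((a - my) / sy) :=
  bivariate_censored_conditional_mean_lower_general mx my σx sy c hsy hc f hf a
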